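/- arXiv:2006.10247 — 2 statements merged into one kernel-verified Lean document; each statement's English description precedes it below -/
import Mathlib

section
/- Let π and ι be permutations of {1,…,n} of type (k,n) with ι ≤_∘ π, and let f, i ∈ Bound(k,n) be their lifts. Then i⁻¹·f·i ∈ Bound(k,n); consequently i⁻¹·f·i is the lift of the permutation μ = ι⁻¹πι, which has type (k,n). -/
open Finset

/-- `f` is an affine permutation of period `n`: an `n`-periodic bijection of `ℤ`. -/
def IsAffinePerm (n : ℕ) (f : Equiv.Perm ℤ) : Prop :=
  ∀ a : ℤ, f (a + n) = f a + n

/-- The length of an affine permutation of period `n`: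
the number of pairs `(i, j)` with `i ∈ {1,…,n}`, `j ∈ ℤ`, `i < j` and `f i > f j`. -/
noncomputable def aLen (n : ℕ) (f : Equiv.Perm ℤ) : ℕ :=
  Set.ncard {p : ℤ × ℤ | 1 ≤ p.1 ∧ p.1 ≤ (n : ℤ) ∧ p.1 < p.2 ∧ f p.2 < f p.1}

/-- `t` is the affine transposition `t_{a,b}` (period `n`): it swaps `a + jn` and `b + jn`
for all `j : ℤ` and fixes everything else; requires `a ≢ b (mod n)`. -/
def IsAffTranspAt (n : ℕ) (a b : ℤ) (t : Equiv.Perm ℤ) : Prop :=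
  ¬ ((n : ℤ) ∣ b - a) ∧
    ∀ x : ℤ,
      ((n : ℤ) ∣ x - a → t x = x - a + b) ∧
      ((n : ℤ) ∣ x - b → t x = x - b + a) ∧
      (¬ (n : ℤ) ∣ x - a → ¬ (n : ℤ) ∣ x - b → t x = x)

/-- `t` is an affine transposition of period `n`. -/
def IsAffTransp (n : ℕ) (t : Equiv.Perm ℤ) : Prop :=
  ∃ a b : ℤ, IsAffTranspAt n a b t

/-- The right associated reflections `T_R(f)`: affine transpositions `t` with `ℓ(f t) < ℓ(f)`. -/
def TR (n : ℕ) (f : Equiv.Perm ℤ) : Set (Equiv.Perm ℤ) :=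
  {t | IsAffTransp n t ∧ aLen n (f * t) < aLen n f}

/-- The left associated reflections `T_L(f)`: affine transpositions `t` with `ℓ(t f) < ℓ(f)`. -/
def TL (n : ℕ) (f : Equiv.Perm ℤ) : Set (Equiv.Perm ℤ) :=
  {t | IsAffTransp n t ∧ aLen n (t * f) < aLen n f}

/-- `u ≤_R f`: the factorization `f = u · (u⁻¹ f)` is length-additive. -/
def LeR (n : ℕ) (u f : Equiv.Perm ℤ) : Prop :=
  aLen n f = aLen n u + aLen n (u⁻¹ * f)

/-- `Bound k n`: bounded affine permutations, `a < f a ≤ a + n` with average shift `k`. -/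
def Bound (k n : ℕ) : Set (Equiv.Perm ℤ) :=
  {f | IsAffinePerm n f ∧ (∀ a : ℤ, a < f a ∧ f a ≤ a + n) ∧
    (∑ a ∈ Finset.Icc (1 : ℤ) (n : ℤ), (f a - a)) = (k : ℤ) * n}

/-- A permutation of `{1,…,n}` (modelled on `Fin n`) has type `(k,n)`:
`#{a : a ≤ π⁻¹ a} = k`. -/
def IsType (k n : ℕ) (π : Equiv.Perm (Fin n)) : Prop :=
  (Finset.univ.filter (fun a : Fin n => a ≤ π⁻¹ a)).card = k

/-- `f` is the lift of `π` : the affine permutation with `f a = π a` if `π a > a`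
and `f a = π a + n` otherwise (identifying `v : Fin n` with the integer `v + 1 ∈ {1,…,n}`). -/
def IsLift (n : ℕ) (π : Equiv.Perm (Fin n)) (f : Equiv.Perm ℤ) : Prop :=
  IsAffinePerm n f ∧ ∀ a : Fin n,
    f ((a.val : ℤ) + 1) =
      if (a.val : ℤ) < ((π a).val : ℤ) then ((π a).val : ℤ) + 1
      else ((π a).val : ℤ) + 1 + n

/-- The position of `a` in the cyclic (linear) order `<_i` on `Fin n` starting at `i`. -/
def cPos (n : ℕ) [NeZero n] (i a : Fin n) : ℕ := (a - i).val

/-- `a, b, c, d` is a cyclically ordered quadruple. -/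
def CyclicOrdered (n : ℕ) [NeZero n] (a b c d : Fin n) : Prop :=
  0 < cPos n a b ∧ cPos n a b < cPos n a c ∧ cPos n a c < cPos n a d

/-- Two subsets `I, J` of `Fin n` are weakly separated. -/
def WeaklySeparated (n : ℕ) [NeZero n] (I J : Finset (Fin n)) : Prop :=
  ¬ ∃ a b c d : Fin n, CyclicOrdered n a b c d ∧
      a ∈ I ∧ a ∉ J ∧ c ∈ I ∧ c ∉ J ∧ b ∈ J ∧ b ∉ I ∧ d ∈ J ∧ d ∉ I

/-- `(I_1,…,I_n)` (indexed by `Fin n`, cyclically) is a Grassmannlike necklace of type `(k,n)`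
with removal permutation `ρ` and insertion permutation `ι`. -/
def IsGrassNecklace (n k : ℕ) [NeZero n] (I : Fin n → Finset (Fin n))
    (ρ ι : Equiv.Perm (Fin n)) : Prop :=
  (∀ a : Fin n, (I a).card = k) ∧
    ∀ a : Fin n, ρ a ∈ I a ∧ I (a + 1) = insert (ι a) ((I a).erase (ρ a))

open Fin.NatCast in
/-- Auxiliary construction of the Grassmannlike necklace with removal `ρ` and insertion `ι`. -/
def neckAux (n : ℕ) [NeZero n] (ρ ι : Equiv.Perm (Fin n)) : ℕ → Finset (Fin n)
  | 0 => Finset.univ.filter (fun a : Fin n => ρ⁻¹ a ≤ ι⁻¹ a)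
  | m + 1 => insert (ι (m : Fin n)) ((neckAux n ρ ι m).erase (ρ (m : Fin n)))

/-- The Grassmannlike necklace with removal permutation `ρ` and insertion permutation `ι`:
its first term is `{a : ρ⁻¹ a ≤ ι⁻¹ a}` and `I_{a+1} = (I_a ∖ {ρ a}) ∪ {ι a}`.
The forward Grassmann necklace of `π` is `necklace n 1 π`; the reverse Grassmann
necklace of `π` is `necklace n π⁻¹ 1`. -/
def necklace (n : ℕ) [NeZero n] (ρ ι : Equiv.Perm (Fin n)) (j : Fin n) : Finset (Fin n) :=
  neckAux n ρ ι j.val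

/-- The sorted list of positions (in the order `<_i`) of the elements of `S`. -/
def sortedShift (n : ℕ) [NeZero n] (i : Fin n) (S : Finset (Fin n)) : List ℕ :=
  (S.image (fun a => cPos n i a)).sort (· ≤ ·)

/-- `S ≤_i T` componentwise on `<_i`-sorted lists. -/
def leCyc (n : ℕ) [NeZero n] (i : Fin n) (S T : Finset (Fin n)) : Prop :=
  List.Forall₂ (· ≤ ·) (sortedShift n i S) (sortedShift n i T)

/-- The positroid `𝓜_π` of `π` (via Oh's theorem, taken as the definition). -/
def positroid (k n : ℕ) [NeZero n] (π : Equiv.Perm (Fin n)) : Set (Finset (Fin n)) :=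
  {S | S.card = k ∧ ∀ j : Fin n, leCyc n j (necklace n 1 π j) S}

/-- `v` lies strictly inside the arc from `w` clockwise to `x`. -/
def InArc (n : ℕ) [NeZero n] (w v x : Fin n) : Prop :=
  0 < cPos n w v ∧ cPos n w v < cPos n w x

/-- The chords `w ↦ x` and `y ↦ z` are noncrossing: they do not intersect,
including at boundary vertices. -/
def Noncrossing (n : ℕ) [NeZero n] (w x y z : Fin n) : Prop :=
  w ≠ y ∧ w ≠ z ∧ x ≠ y ∧ x ≠ z ∧
    ¬ ((InArc n w y x ∧ InArc n x z w) ∨ (InArc n w z x ∧ InArc n x y w))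

/-- The (distinct) chords `w ↦ x` and `y ↦ z` are crossing. -/
def Crossing (n : ℕ) [NeZero n] (w x y z : Fin n) : Prop :=
  (w ≠ y ∨ x ≠ z) ∧ ¬ Noncrossing n w x y z

/-- The noncrossing chords `w ↦ x` and `y ↦ z` are aligned:
`w <_w y <_w z <_w x`, or `w <_w x <_w z <_w y`, or `w = x` and `w <_w y <_w z`. -/
def Aligned (n : ℕ) [NeZero n] (w x y z : Fin n) : Prop :=
  Noncrossing n w x y z ∧
    ((0 < cPos n w y ∧ cPos n w y < cPos n w z ∧ cPos n w z < cPos n w x) ∨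
     (0 < cPos n w x ∧ cPos n w x < cPos n w z ∧ cPos n w z < cPos n w y) ∨
     (w = x ∧ 0 < cPos n w y ∧ cPos n w y < cPos n w z))

/-- A noncrossing toggle relating two Grassmannlike necklaces, each encoded by its pair
(removal permutation, insertion permutation): at some position `p`, the toggle is defined
(`ρ(p-1) ≠ ι(p)` and `ρ(p) ≠ ι(p-1)`), the chords `ρ(p-1) ↦ ι(p-1)` and `ρ(p) ↦ ι(p)`
are noncrossing, and the new permutations are obtained by right multiplication by the
transposition of positions `p-1, p`. -/
def NoncrossingToggle (n : ℕ) [NeZero n]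
    (N N' : Equiv.Perm (Fin n) × Equiv.Perm (Fin n)) : Prop :=
  ∃ p : Fin n,
    N.1 (p - 1) ≠ N.2 p ∧ N.1 p ≠ N.2 (p - 1) ∧
    Noncrossing n (N.1 (p - 1)) (N.2 (p - 1)) (N.1 p) (N.2 p) ∧
    N'.1 = N.1 * Equiv.swap (p - 1) p ∧ N'.2 = N.2 * Equiv.swap (p - 1) p

/-- The Plücker coordinate `Δ_I(M)`: the determinant of the `k × k` submatrix of `M`
on the columns indexed by `I` (in increasing order); junk value `0` if `I.card ≠ k`. -/
noncomputable def plucker (k n : ℕ) (M : Matrix (Fin k) (Fin n) ℂ) (I : Finset (Fin n)) : ℂ :=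
  if h : I.card = k then
    Matrix.det (Matrix.of (fun r c : Fin k => M r ((I.orderIsoOfFin h) c).1))
  else 0

/-- The matrix cone `Π°_π` over the open positroid variety of `π`: full-rank `k × n`
matrices with `Δ_J = 0` for `J ∉ 𝓜_π` and nonvanishing forward-necklace Plücker coordinates. -/
def openPos (k n : ℕ) [NeZero n] (π : Equiv.Perm (Fin n)) : Set (Matrix (Fin k) (Fin n) ℂ) :=
  {M | M.rank = k ∧
    (∀ J : Finset (Fin n), J.card = k → J ∉ positroid k n π → plucker k n M J = 0) ∧
    (∀ j : Fin n, plucker k n M (necklace n 1 π j) ≠ 0)}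

/-- `N` is the right twist of `M` along the necklace `I` with removal permutation `ρ`:
for all `a` and all `b ∈ I a`, `⟨N_a, M_b⟩ = δ_{b, ρ a}`. -/
def IsRightTwist (k n : ℕ) (I : Fin n → Finset (Fin n)) (ρ : Equiv.Perm (Fin n))
    (M N : Matrix (Fin k) (Fin n) ℂ) : Prop :=
  ∀ a : Fin n, ∀ b ∈ I a, (∑ j : Fin k, N j a * M j b) = if b = ρ a then 1 else 0

/-- `N` is the left twist of `M` along the necklace `I` with insertion permutation `ι`:
for all `a` and all `b ∈ I (a+1)`, `⟨N_a, M_b⟩ = δ_{b, ι a}`. -/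
def IsLeftTwist (k n : ℕ) [NeZero n] (I : Fin n → Finset (Fin n)) (ι : Equiv.Perm (Fin n))
    (M N : Matrix (Fin k) (Fin n) ℂ) : Prop :=
  ∀ a : Fin n, ∀ b ∈ I (a + 1), (∑ j : Fin k, N j a * M j b) = if b = ι a then 1 else 0

/-!
Write `h = i⁻¹ f`. The inversions of `f = i h` that are not inversions of `h` inject (after a
common shift by a multiple of `n`) into the inversions of `i`, so `ℓ(f) ≤ ℓ(i) + ℓ(h)`, and
equality forces every inversion of `h` to be an inversion of `f`. Equivalently, `i⁻¹` keeps the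
order of every pair `y < y'` whose order `f⁻¹` keeps. Applied with `x = i a` to the pairs
`x < f x` and `f x < x + n`, this gives `a < i⁻¹ f i a ≤ a + n`. The average shift
`(1/n) ∑ (g a - a)` is additive on affine permutations, hence invariant under conjugation, and
`i⁻¹ f i` permutes residues mod `n` as `ι⁻¹ π ι` does; together with the bounds this makes
`i⁻¹ f i` the lift of `ι⁻¹ π ι`, whose type is read off from the average shift.
-/

section Window

variable {n : ℕ}

def windowRep (n : ℕ) (x : ℤ) : ℤ := (x - 1) % n + 1

lemma windowRep_mem_Icc (hn : 0 < n) (x : ℤ) : windowRep n x ∈ Icc (1 : ℤ) n := by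
  have hn' : (0 : ℤ) < n := by exact_mod_cast hn
  have := Int.emod_nonneg (x - 1) hn'.ne'
  have := Int.emod_lt_of_pos (x - 1) hn'
  rw [mem_Icc, windowRep]
  omega

lemma exists_windowRep_eq_add_mul (x : ℤ) : ∃ t : ℤ, windowRep n x = x + t * n :=
  ⟨-((x - 1) / n), by rw [windowRep, Int.emod_def]; ring⟩

lemma eq_of_dvd_sub_of_mem_Ioc {c x y : ℤ} (hd : (n : ℤ) ∣ x - y)
    (hx : x ∈ Set.Ioc c (c + n)) (hy : y ∈ Set.Ioc c (c + n)) : x = y := by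
  have : |x - y| < n := by
    obtain ⟨hx₁, hx₂⟩ := hx
    obtain ⟨hy₁, hy₂⟩ := hy
    rw [abs_lt]
    constructor <;> linarith
  linarith [Int.eq_zero_of_abs_lt_dvd hd this]

lemma windowRep_eq_of_dvd_sub {a x : ℤ} (ha : a ∈ Icc (1 : ℤ) n) (hd : (n : ℤ) ∣ x - a) :
    windowRep n x = a := by
  obtain ⟨t, ht⟩ := exists_windowRep_eq_add_mul (n := n) x
  have hn : 0 < n := by have := mem_Icc.1 ha; omega
  refine eq_of_dvd_sub_of_mem_Ioc (n := n) (c := 0) ?_ ?_ ?_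
  · rw [ht, show x + t * n - a = x - a + n * t by ring]
    exact dvd_add hd (dvd_mul_right _ _)
  · have := mem_Icc.1 (windowRep_mem_Icc hn x); exact ⟨by omega, by omega⟩
  · have := mem_Icc.1 ha; exact ⟨by omega, by omega⟩

end Window

namespace IsAffinePerm

variable {n : ℕ} {f g : Equiv.Perm ℤ}

lemma periodic_sub (hf : IsAffinePerm n f) : Function.Periodic (fun x => f x - x) (n : ℤ) :=
  fun x => by
    show f (x + n) - (x + n) = f x - x
    rw [hf]; ring

lemma apply_add_mul (hf : IsAffinePerm n f) (x t : ℤ) : f (x + t * n) = f x + t * n := by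
  have := hf.periodic_sub.int_mul t x
  simp only [Int.cast_id] at this
  linarith

lemma inv (hf : IsAffinePerm n f) : IsAffinePerm n f⁻¹ := fun a =>
  f.injective (by rw [hf]; simp)

lemma mul (hf : IsAffinePerm n f) (hg : IsAffinePerm n g) : IsAffinePerm n (f * g) := fun a => by
  simp only [Equiv.Perm.mul_apply, hg a, hf (g a)]

lemma dvd_sub_apply (hf : IsAffinePerm n f) {x y : ℤ} (h : (n : ℤ) ∣ x - y) :
    (n : ℤ) ∣ f x - f y := by
  obtain ⟨t, ht⟩ := h
  rw [show x = y + t * n by linarith, hf.apply_add_mul]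
  exact ⟨t, by ring⟩

lemma dvd_sub_apply_iff (hf : IsAffinePerm n f) {x y : ℤ} :
    (n : ℤ) ∣ f x - f y ↔ (n : ℤ) ∣ x - y :=
  ⟨fun h => by simpa using hf.inv.dvd_sub_apply h, hf.dvd_sub_apply⟩

lemma exists_abs_sub_le (hn : 0 < n) (hf : IsAffinePerm n f) : ∃ C, ∀ x, |f x - x| ≤ C := by
  refine ⟨∑ a ∈ Icc (1 : ℤ) n, |f a - a|, fun x => ?_⟩
  obtain ⟨t, ht⟩ := exists_windowRep_eq_add_mul (n := n) x
  have hx : f x - x = f (windowRep n x) - windowRep n x := by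
    rw [ht]; exact (hf.periodic_sub.int_mul t x).symm
  rw [hx]
  exact single_le_sum (f := fun a => |f a - a|) (fun _ _ => abs_nonneg _)
    (windowRep_mem_Icc hn x)

lemma sum_Icc_comp (hn : 0 < n) (hf : IsAffinePerm n f) {φ : ℤ → ℤ}
    (hφ : Function.Periodic φ n) :
    ∑ a ∈ Icc (1 : ℤ) n, φ (f a) = ∑ a ∈ Icc (1 : ℤ) n, φ a := by
  have hrep : ∀ x, φ (windowRep n x) = φ x := fun x => by
    obtain ⟨t, ht⟩ := exists_windowRep_eq_add_mul (n := n) x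
    rw [ht]; exact hφ.int_mul t x
  have hdvd : ∀ x, (n : ℤ) ∣ windowRep n x - x := fun x => by
    obtain ⟨t, ht⟩ := exists_windowRep_eq_add_mul (n := n) x
    exact ⟨t, by rw [ht]; ring⟩
  refine sum_nbij' (fun a => windowRep n (f a)) (fun b => windowRep n (f⁻¹ b))
    (fun a _ => windowRep_mem_Icc hn _) (fun b _ => windowRep_mem_Icc hn _)
    (fun a ha => windowRep_eq_of_dvd_sub ha ?_) (fun b hb => windowRep_eq_of_dvd_sub hb ?_)
    (fun a _ => (hrep _).symm)
  · simpa using hf.inv.dvd_sub_apply (hdvd (f a))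
  · simpa using hf.dvd_sub_apply (hdvd (f⁻¹ b))

end IsAffinePerm

section Displacement

variable {n : ℕ} {f g : Equiv.Perm ℤ}

noncomputable def displacement (n : ℕ) (f : Equiv.Perm ℤ) : ℤ := ∑ a ∈ Icc (1 : ℤ) n, (f a - a)

lemma displacement_mul (hn : 0 < n) (hf : IsAffinePerm n f) (hg : IsAffinePerm n g) :
    displacement n (f * g) = displacement n f + displacement n g := by
  have hsplit : displacement n (f * g) =
      ∑ a ∈ Icc (1 : ℤ) n, (f (g a) - g a) + displacement n g := by
    rw [displacement, displacement, ← sum_add_distrib]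
    exact sum_congr rfl fun a _ => by simp only [Equiv.Perm.mul_apply]; ring
  rw [hsplit, hg.sum_Icc_comp hn hf.periodic_sub]
  rfl

lemma displacement_inv (hn : 0 < n) (hf : IsAffinePerm n f) :
    displacement n f⁻¹ = -displacement n f := by
  have h := displacement_mul hn hf.inv hf
  have h1 : displacement n 1 = 0 := by simp [displacement]
  rw [inv_mul_cancel, h1] at h
  linarith

lemma displacement_conj (hn : 0 < n) (hf : IsAffinePerm n f) (hg : IsAffinePerm n g) :
    displacement n (g⁻¹ * f * g) = displacement n f := by
  rw [displacement_mul hn (hg.inv.mul hf) hg, displacement_mul hn hg.inv hf,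
    displacement_inv hn hg]
  ring

end Displacement

section Inversions

variable {n : ℕ} {f h u : Equiv.Perm ℤ}

def invSet (n : ℕ) (f : Equiv.Perm ℤ) : Set (ℤ × ℤ) :=
  {p | 1 ≤ p.1 ∧ p.1 ≤ (n : ℤ) ∧ p.1 < p.2 ∧ f p.2 < f p.1}

lemma aLen_eq_ncard_invSet : aLen n f = (invSet n f).ncard := rfl

lemma IsAffinePerm.finite_invSet (hn : 0 < n) (hf : IsAffinePerm n f) :
    (invSet n f).Finite := by
  obtain ⟨C, hC⟩ := hf.exists_abs_sub_le hn
  refine ((Set.finite_Icc (1 : ℤ) n).prod (Set.finite_Icc (1 : ℤ) (n + 2 * C))).subset ?_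
  rintro ⟨a, b⟩ ⟨ha₁, ha₂, hab, hinv⟩
  have := abs_le.1 (hC a)
  have := abs_le.1 (hC b)
  exact ⟨⟨ha₁, ha₂⟩, by simp only at *; omega, by simp only at *; omega⟩

/-- The inversions of `u * h` that are not inversions of `h` are moved by `h`, up to a common
shift by a multiple of `n`, onto distinct inversions of `u`. -/
lemma ncard_invSet_mul_diff_le (hn : 0 < n) (hu : IsAffinePerm n u) (hh : IsAffinePerm n h) :
    (invSet n (u * h) \ invSet n h).ncard ≤ aLen n u := by
  let shift : ℤ × ℤ → ℤ := fun p => windowRep n (h p.1) - h p.1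
  have hshift : ∀ p, ∃ t : ℤ, shift p = t * n := fun p => by
    obtain ⟨t, ht⟩ := exists_windowRep_eq_add_mul (n := n) (h p.1)
    exact ⟨t, by simp only [shift, ht]; ring⟩
  refine Set.ncard_le_ncard_of_injOn (fun p => (h p.1 + shift p, h p.2 + shift p)) ?_ ?_
    (hu.finite_invSet hn)
  · rintro ⟨a, b⟩ ⟨⟨ha₁, ha₂, hab, hinv⟩, hnot⟩
    obtain ⟨t, ht⟩ := hshift (a, b)
    have hlt : h a < h b := by
      refine lt_of_le_of_ne (not_lt.1 fun h' => hnot ⟨ha₁, ha₂, hab, h'⟩) fun e => ?_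
      exact hab.ne (h.injective e)
    have hw : h a + shift (a, b) = windowRep n (h a) := by simp only [shift]; ring
    have hmem := mem_Icc.1 (windowRep_mem_Icc hn (h a))
    refine ⟨hw ▸ hmem.1, hw ▸ hmem.2, by simp only; linarith, ?_⟩
    show u (h b + shift (a, b)) < u (h a + shift (a, b))
    rw [ht, hu.apply_add_mul, hu.apply_add_mul]
    simp only [Equiv.Perm.mul_apply] at hinv
    linarith
  · rintro ⟨a, b⟩ ⟨⟨ha₁, ha₂, -⟩, -⟩ ⟨a', b'⟩ ⟨⟨ha₁', ha₂', -⟩, -⟩ he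
    simp only [Prod.mk.injEq, shift] at he
    have hdvd : (n : ℤ) ∣ h a - h a' := by
      obtain ⟨t, ht⟩ := exists_windowRep_eq_add_mul (n := n) (h a)
      obtain ⟨t', ht'⟩ := exists_windowRep_eq_add_mul (n := n) (h a')
      exact ⟨t' - t, by linarith [he.1]⟩
    have haa : a = a' := eq_of_dvd_sub_of_mem_Ioc (c := 0) (hh.dvd_sub_apply_iff.1 hdvd)
      ⟨by omega, by omega⟩ ⟨by omega, by omega⟩
    subst haa
    exact Prod.ext rfl (h.injective (by linarith [he.2]))

lemma invSet_subset_of_aLen_mul_eq (hn : 0 < n) (hu : IsAffinePerm n u)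
    (hh : IsAffinePerm n h) (hadd : aLen n (u * h) = aLen n u + aLen n h) :
    invSet n h ⊆ invSet n (u * h) := by
  have hsplit := Set.ncard_inter_add_ncard_sdiff_eq_ncard (invSet n (u * h)) (invSet n h)
    ((hu.mul hh).finite_invSet hn)
  have hdiff := ncard_invSet_mul_diff_le hn hu hh
  rw [aLen_eq_ncard_invSet, aLen_eq_ncard_invSet, aLen_eq_ncard_invSet] at hadd
  rw [aLen_eq_ncard_invSet] at hdiff
  have heq : invSet n (u * h) ∩ invSet n h = invSet n h :=
    Set.eq_of_subset_of_ncard_le Set.inter_subset_right (by omega) (hh.finite_invSet hn)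
  exact heq ▸ Set.inter_subset_left

end Inversions

section Conjugation

variable {n k : ℕ} {f i : Equiv.Perm ℤ}

lemma LeR.inv_apply_lt_inv_apply (hn : 0 < n) (hf : IsAffinePerm n f) (hi : IsAffinePerm n i)
    (hle : LeR n i f) {a b : ℤ} (hab : a < b) (hfab : f a < f b) :
    i⁻¹ (f a) < i⁻¹ (f b) := by
  have hsub := invSet_subset_of_aLen_mul_eq hn hi (hi.inv.mul hf)
    (by rw [mul_inv_cancel_left]; exact hle)
  rw [mul_inv_cancel_left] at hsub
  have hne : i⁻¹ (f a) ≠ i⁻¹ (f b) := fun e => hab.ne (by simpa using e)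
  refine lt_of_le_of_ne (not_lt.1 fun hlt => ?_) hne
  obtain ⟨t, ht⟩ := exists_windowRep_eq_add_mul (n := n) a
  have hmem := mem_Icc.1 (windowRep_mem_Icc hn a)
  have hinv : (a + t * n, b + t * n) ∈ invSet n (i⁻¹ * f) := by
    refine ⟨by omega, by omega, by simp only; omega, ?_⟩
    rw [(hi.inv.mul hf).apply_add_mul, (hi.inv.mul hf).apply_add_mul]
    simpa using hlt
  have := (hsub hinv).2.2.2
  simp only [hf.apply_add_mul] at this
  omega

lemma LeR.conj_apply_mem_Ioc (hn : 0 < n) (hf : IsAffinePerm n f)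
    (hfb : ∀ a, a < f a ∧ f a ≤ a + n) (hi : IsAffinePerm n i) (hle : LeR n i f) (a : ℤ) :
    a < (i⁻¹ * f * i) a ∧ (i⁻¹ * f * i) a ≤ a + n := by
  set x := i a
  have hx : i⁻¹ x = a := by simp [x]
  have hfx : f (f⁻¹ x) = x := by simp
  have hlo := hfb (f⁻¹ x)
  rw [hfx] at hlo
  simp only [Equiv.Perm.mul_apply]
  constructor
  · simpa [hfx, hx] using hle.inv_apply_lt_inv_apply hn hf hi hlo.1 (by rw [hfx]; exact (hfb x).1)
  · rcases (hfb x).2.lt_or_eq with hlt | heq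
    · have hshift : f (f⁻¹ x + n) = x + n := by rw [hf, hfx]
      have hxy : x < f⁻¹ x + n := lt_of_le_of_ne (by omega) fun e => by
        rw [← e] at hshift; omega
      have := hle.inv_apply_lt_inv_apply hn hf hi hxy (hshift ▸ hlt)
      rw [hshift, hi.inv, hx] at this
      exact this.le
    · rw [heq, hi.inv, hx]

lemma conj_mem_Bound (hn : 0 < n) (hf : f ∈ Bound k n) (hi : IsAffinePerm n i)
    (hle : LeR n i f) : i⁻¹ * f * i ∈ Bound k n := by
  obtain ⟨hfa, hfb, hfs⟩ := hf
  exact ⟨(hi.inv.mul hfa).mul hi, hle.conj_apply_mem_Ioc hn hfa hfb hi,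
    (displacement_conj hn hfa hi).trans hfs⟩

end Conjugation

section Lift

variable {n : ℕ} {π ι σ : Equiv.Perm (Fin n)} {f i g : Equiv.Perm ℤ}

lemma IsLift.dvd_sub_apply (hf : IsLift n π f) {x : ℤ} {b : Fin n}
    (hx : (n : ℤ) ∣ x - (b.val + 1)) : (n : ℤ) ∣ f x - ((π b).val + 1) := by
  have hb : (n : ℤ) ∣ f (b.val + 1) - ((π b).val + 1) := by
    rw [hf.2 b]
    split_ifs
    · simp
    · exact ⟨1, by ring⟩
  have := dvd_add (hf.1.dvd_sub_apply hx) hb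
  rwa [sub_add_sub_cancel] at this

lemma IsLift.dvd_sub_inv_apply (hf : IsLift n π f) {x : ℤ} {b : Fin n}
    (hx : (n : ℤ) ∣ x - (b.val + 1)) : (n : ℤ) ∣ f⁻¹ x - ((π⁻¹ b).val + 1) := by
  have hb : (n : ℤ) ∣ f ((π⁻¹ b).val + 1) - (b.val + 1) := by
    simpa using hf.dvd_sub_apply (x := (π⁻¹ b).val + 1) (b := π⁻¹ b) (by simp)
  rw [← hf.1.dvd_sub_apply_iff]
  simpa using dvd_sub hx hb

lemma isLift_of_dvd_sub_apply (hg : IsAffinePerm n g) (hgb : ∀ x, x < g x ∧ g x ≤ x + n)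
    (hd : ∀ a : Fin n, (n : ℤ) ∣ g (a.val + 1) - ((σ a).val + 1)) : IsLift n σ g := by
  refine ⟨hg, fun a => ?_⟩
  have hb := hgb (a.val + 1)
  have hσ := (σ a).isLt
  split_ifs with hlt
  · exact eq_of_dvd_sub_of_mem_Ioc (hd a) ⟨hb.1, hb.2⟩ ⟨by omega, by omega⟩
  · refine eq_of_dvd_sub_of_mem_Ioc ?_ ⟨hb.1, hb.2⟩ ⟨by omega, by omega⟩
    have := dvd_sub (hd a) (dvd_refl (n : ℤ))
    rwa [sub_sub] at this

lemma IsLift.conj (hf : IsLift n π f) (hi : IsLift n ι i)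
    (hb : ∀ x, x < (i⁻¹ * f * i) x ∧ (i⁻¹ * f * i) x ≤ x + n) :
    IsLift n (ι⁻¹ * π * ι) (i⁻¹ * f * i) :=
  isLift_of_dvd_sub_apply ((hi.1.inv.mul hf.1).mul hi.1) hb fun _ =>
    hi.dvd_sub_inv_apply (hf.dvd_sub_apply (hi.dvd_sub_apply (by simp)))

end Lift

section TypeOfLift

variable {n k : ℕ} {σ : Equiv.Perm (Fin n)} {g : Equiv.Perm ℤ}

lemma sum_Icc_one_eq_sum_fin {M : Type*} [AddCommMonoid M] (n : ℕ) (F : ℤ → M) :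
    ∑ x ∈ Icc (1 : ℤ) n, F x = ∑ a : Fin n, F (a.val + 1) := by
  refine (sum_nbij (fun a : Fin n => (a.val : ℤ) + 1) ?_ ?_ ?_ fun _ _ => rfl).symm
  · intro a _
    have := a.isLt
    rw [mem_Icc]
    omega
  · intro a _ b _ hab
    exact Fin.ext (by simpa using hab)
  · intro x hx
    simp only [coe_Icc, Set.mem_Icc] at hx
    exact ⟨⟨(x - 1).toNat, by omega⟩, by simp, by simp only; omega⟩

lemma IsLift.displacement_eq (hg : IsLift n σ g) :
    displacement n g = n * #{a | σ a ≤ a} := by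
  have hterm : ∀ a : Fin n, g (a.val + 1) - (a.val + 1) =
      ((σ a).val - a.val : ℤ) + if σ a ≤ a then (n : ℤ) else 0 := fun a => by
    rw [hg.2 a]
    by_cases h : σ a ≤ a
    · rw [if_neg (by rw [Fin.le_def] at h; omega), if_pos h]; ring
    · rw [if_pos (by rw [Fin.le_def] at h; omega), if_neg h]; ring
  rw [displacement, sum_Icc_one_eq_sum_fin, sum_congr rfl fun a _ => hterm a, sum_add_distrib,
    sum_sub_distrib, Equiv.sum_comp σ (fun b => (b.val : ℤ)), sub_self, zero_add, sum_ite,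
    sum_const_zero, add_zero, sum_const, nsmul_eq_mul, mul_comm]

lemma card_le_inv_apply_eq {α : Type*} [Fintype α] [LinearOrder α] (σ : Equiv.Perm α) :
    #{a | a ≤ σ⁻¹ a} = #{a | σ a ≤ a} :=
  card_nbij' (σ⁻¹ ·) (σ ·) (fun a ha => by simpa using ha) (fun a ha => by simpa using ha)
    (fun a _ => by simp) (fun a _ => by simp)

lemma isType_of_isLift (hn : 0 < n) (hg : IsLift n σ g) (hd : displacement n g = k * n) :
    IsType k n σ := by
  rw [IsType, card_le_inv_apply_eq]
  have h : (n : ℤ) * #{a | σ a ≤ a} = n * k := by rw [← hg.displacement_eq, hd, mul_comm]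
  exact_mod_cast Int.eq_of_mul_eq_mul_left (by omega) h

end TypeOfLift

theorem conjugate_lift_bounded_general
    (n k : ℕ) (π ι : Equiv.Perm (Fin n)) (f i : Equiv.Perm ℤ)
    (hf : IsLift n π f) (hfB : f ∈ Bound k n)
    (hi : IsLift n ι i)
    (hle : LeR n i f) :
    i⁻¹ * f * i ∈ Bound k n ∧
    IsLift n (ι⁻¹ * π * ι) (i⁻¹ * f * i) ∧
    IsType k n (ι⁻¹ * π * ι) := by
  have hn : 0 < n := by have := hfB.2.1 0; omega
  have hgB : i⁻¹ * f * i ∈ Bound k n := conj_mem_Bound hn hfB hi.1 hle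
  have hgL : IsLift n (ι⁻¹ * π * ι) (i⁻¹ * f * i) := hf.conj hi hgB.2.1
  exact ⟨hgB, hgL, isType_of_isLift hn hgL hgB.2.2⟩

/-- If `ι ≤_∘ π` with lifts `i, f ∈ Bound(k,n)`, then `i⁻¹·f·i ∈ Bound(k,n)`
and is the lift of `μ = ι⁻¹πι`, which has type `(k,n)`. -/
theorem conjugate_lift_bounded
    (n k : ℕ) (π ι : Equiv.Perm (Fin n)) (f i : Equiv.Perm ℤ)
    (hπ : IsType k n π) (hι : IsType k n ι)
    (hf : IsLift n π f) (hfB : f ∈ Bound k n)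
    (hi : IsLift n ι i) (hiB : i ∈ Bound k n)
    (hle : LeR n i f) :
    i⁻¹ * f * i ∈ Bound k n ∧
    IsLift n (ι⁻¹ * π * ι) (i⁻¹ * f * i) ∧
    IsType k n (ι⁻¹ * π * ι) :=
  conjugate_lift_bounded_general n k π ι f i hf hfB hi hle
end

section
/- Let π be a permutation of {1,…,n} of type (k,n) with lift f ∈ Bound(k,n). Suppose that either (a) π has exactly one descent, i.e. exactly one position a with π(a) > π(a+1), and π(b) ≠ b for all b ≤ a (so that the open positroid variety of π is an open Schubert variety), or (b) the values 1,…,k appear in increasing order in π, the values k+1,…,n appear in increasing order in π, and π(b) ≠ b whenever π(b) ∈ {k+1,…,n} (open opposite Schubert variety). Then for every permutation ι of type (k,n) with ι ≤_∘ π and lift i ∈ Bound(k,n), one has ℓ(i⁻¹·f·i) = ℓ(f). -/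
open Finset

/-- `π` has a descent at position `a` (0-indexed). -/
def DescentAt (n : ℕ) (π : Equiv.Perm (Fin n)) (a : ℕ) : Prop :=
  ∃ h : a + 1 < n, π ⟨a + 1, h⟩ < π ⟨a, Nat.lt_of_succ_lt h⟩

/-!
Write `Inv g` for the set of pairs `x < y` with `g y < g x`. Counting orbits of the diagonal shift
by `(n, n)` gives `ℓ(uv) + 2 #(Inv u ∩ Inv v⁻¹) = ℓ(u) + ℓ(v)`, so `ℓ(uv) = ℓ(u) + ℓ(v)` exactly
when `Inv u ∩ Inv v⁻¹ = ∅`. Applied to `f = i · (i⁻¹ f)`, the hypothesis `i ≤_R f` yields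
`Inv i⁻¹ ⊆ Inv f⁻¹`.

In both Schubert cases `Inv f ∩ Inv f⁻¹ = ∅`: in case (a) `f` increases on every block
`{nm + 1, …, nm + n}`, so each inversion of `f` crosses blocks while its two values lie in one
block; in case (b) it is the other way round. Comparing an inversion of `f⁻¹` with the
corresponding inversion of `f` then gives a contradiction.

These two facts force `Inv (i⁻¹ f) ∩ Inv i⁻¹ = ∅`, hence
`ℓ(i⁻¹ f i) = ℓ(i⁻¹ f) + ℓ(i) = ℓ(f)`.
-/

section Inversions

variable {α : Type*} [LinearOrder α]

def inversions (g : Equiv.Perm α) : Set (α × α) := {p | p.1 < p.2 ∧ g p.2 < g p.1}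

lemma mk_inv_mem_inversions {g : Equiv.Perm α} {x y : α} (h : (x, y) ∈ inversions g⁻¹) :
    (g⁻¹ y, g⁻¹ x) ∈ inversions g :=
  ⟨h.2, by simpa using h.1⟩

/-- The inversions of `g` either all stay inside the fibres of `β` (if `b`) or all cross them,
and their values do the opposite. -/
theorem inversions_inter_inversions_inv_eq_empty {γ : Type*} {g : Equiv.Perm α} (β : α → γ)
    (b : Prop) (h : ∀ x y, (x, y) ∈ inversions g → (β x = β y ↔ b) ∧ (β (g x) = β (g y) ↔ ¬ b)) :
    inversions g ∩ inversions g⁻¹ = ∅ := by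
  refine Set.eq_empty_of_forall_notMem fun ⟨x, y⟩ ⟨hg, hginv⟩ => ?_
  have hsame := (h x y hg).1
  have hvalues := (h _ _ (mk_inv_mem_inversions hginv)).2
  simp only [Equiv.Perm.coe_inv, Equiv.apply_symm_apply, eq_comm (a := β y)] at hvalues
  tauto

theorem inversions_inv_subset_of_inter_eq_empty {i f : Equiv.Perm α}
    (h : inversions i ∩ inversions (f⁻¹ * i) = ∅) : inversions i⁻¹ ⊆ inversions f⁻¹ := by
  rintro ⟨a, b⟩ hab
  have hi := mk_inv_mem_inversions hab
  have hnot : (i⁻¹ b, i⁻¹ a) ∉ inversions (f⁻¹ * i) := fun hfi =>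
    Set.eq_empty_iff_forall_notMem.1 h _ ⟨hi, hfi⟩
  simp only [inversions, Set.mem_ofPred_eq, Equiv.Perm.mul_apply, Equiv.Perm.coe_inv,
    Equiv.apply_symm_apply, not_and, not_lt] at hnot hab ⊢
  exact ⟨hab.1, (hnot hab.2).lt_of_ne (f.symm.injective.ne hab.1.ne')⟩

theorem inversions_inv_mul_inter_inversions_inv_eq_empty {i f : Equiv.Perm α}
    (hle : inversions i ∩ inversions (f⁻¹ * i) = ∅) (hf : inversions f ∩ inversions f⁻¹ = ∅) :
    inversions (i⁻¹ * f) ∩ inversions i⁻¹ = ∅ := by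
  have hsub := inversions_inv_subset_of_inter_eq_empty hle
  refine Set.eq_empty_of_forall_notMem fun ⟨a, b⟩ ⟨hif, hi⟩ => ?_
  have hfa : f a < f b := by
    refine (le_of_not_gt fun hba => ?_).lt_of_ne (f.injective.ne hi.1.ne)
    exact Set.eq_empty_iff_forall_notMem.1 hf (a, b) ⟨⟨hi.1, hba⟩, hsub hi⟩
  have := (hsub (show (f a, f b) ∈ inversions i⁻¹ from ⟨hfa, hif.2⟩)).2
  simp only [Equiv.Perm.coe_inv, Equiv.symm_apply_apply] at this
  exact lt_asymm hi.1 this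

lemma inversions_mul_diff_inversions (u v : Equiv.Perm α) :
    inversions (u * v) \ inversions v =
      Equiv.prodCongr v v ⁻¹' (inversions u \ inversions v⁻¹) := by
  ext ⟨x, y⟩
  have := v.injective.eq_iff (a := x) (b := y)
  simp only [inversions, Set.mem_sdiff, Set.mem_ofPred_eq, Set.mem_preimage, Equiv.prodCongr_apply,
    Prod.map, Equiv.Perm.mul_apply, Equiv.Perm.coe_inv, Equiv.symm_apply_apply]
  grind

lemma inversions_diff_inversions_mul (u v : Equiv.Perm α) :
    inversions v \ inversions (u * v) =
      (Equiv.prodCongr v v).trans (Equiv.prodComm α α) ⁻¹' (inversions u ∩ inversions v⁻¹) := by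
  ext ⟨x, y⟩
  have := u.injective.eq_iff (a := v x) (b := v y)
  have := v.injective.eq_iff (a := x) (b := y)
  simp only [inversions, Set.mem_sdiff, Set.mem_inter_iff, Set.mem_ofPred_eq, Set.mem_preimage,
    Equiv.trans_apply, Equiv.prodCongr_apply, Equiv.prodComm_apply, Prod.map, Prod.swap,
    Equiv.Perm.mul_apply, Equiv.Perm.coe_inv, Equiv.symm_apply_apply]
  grind

end Inversions

section Affine

variable {n : ℕ} {g h : Equiv.Perm ℤ}

lemma IsAffinePerm.apply_add_mul_s15 (hg : IsAffinePerm n g) (a m : ℤ) :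
    g (a + n * m) = g a + n * m := by
  have hper : Function.Periodic (fun a => g a - a) (n : ℤ) := fun a => by simp [hg a]
  have := hper.int_mul m a
  simp only [Int.cast_id, mul_comm (m : ℤ)] at this
  linarith

lemma IsAffinePerm.apply_eq_apply_sub_add (hg : IsAffinePerm n g) (a m : ℤ) :
    g a = g (a - n * m) + n * m := by
  rw [← hg.apply_add_mul_s15, sub_add_cancel]

lemma IsAffinePerm.inv_s15 (hg : IsAffinePerm n g) : IsAffinePerm n g⁻¹ := fun a =>
  g.injective (by rw [hg]; simp)

lemma IsAffinePerm.mul_s15 (hg : IsAffinePerm n g) (hh : IsAffinePerm n h) :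
    IsAffinePerm n (g * h) := fun a => by
  simp only [Equiv.Perm.mul_apply, hh a, hg (h a)]

/-- The index `m` of the period block `{n m + 1, …, n m + n}` containing `z`. -/
def block (n : ℕ) (z : ℤ) : ℤ := (z - 1) / n

lemma block_eq_iff (hn : 0 < n) {z m : ℤ} :
    block n z = m ↔ n * m + 1 ≤ z ∧ z ≤ n * m + n := by
  have hn' : (0 : ℤ) < n := by exact_mod_cast hn
  rw [le_antisymm_iff, block, ← Int.lt_add_one_iff, Int.ediv_lt_iff_lt_mul hn',
    Int.le_ediv_iff_mul_le hn', and_comm]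
  constructor <;> rintro ⟨h1, h2⟩ <;> constructor <;> linarith

lemma block_spec (hn : 0 < n) (z : ℤ) : n * block n z + 1 ≤ z ∧ z ≤ n * block n z + n :=
  (block_eq_iff hn).1 rfl

lemma sub_block_mem_Icc (hn : 0 < n) (z : ℤ) : z - n * block n z ∈ Set.Icc 1 (n : ℤ) := by
  obtain ⟨h1, h2⟩ := block_spec hn z
  constructor <;> linarith

lemma block_add_mul (hn : 0 < n) (z m : ℤ) : block n (z + n * m) = block n z + m := by
  obtain ⟨h1, h2⟩ := block_spec hn z
  rw [block_eq_iff hn, mul_add]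
  constructor <;> linarith

lemma block_eq_zero (hn : 0 < n) {z : ℤ} (hz : z ∈ Set.Icc 1 (n : ℤ)) : block n z = 0 :=
  (block_eq_iff hn).2 (by simpa using hz)

lemma block_mono (hn : 0 < n) : Monotone (block n) := fun _ _ h =>
  Int.ediv_le_ediv (by exact_mod_cast hn) (by linarith)

lemma IsAffinePerm.exists_abs_sub_le_s15 (hn : 0 < n) (hg : IsAffinePerm n g) :
    ∃ D : ℤ, ∀ a, |g a - a| ≤ D := by
  refine ⟨∑ b ∈ Finset.Icc 1 (n : ℤ), |g b - b|, fun a => ?_⟩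
  have hmem : a - n * block n a ∈ Finset.Icc 1 (n : ℤ) := by
    simpa using sub_block_mem_Icc hn a
  have hperiod : g a - a = g (a - n * block n a) - (a - n * block n a) := by
    rw [hg.apply_eq_apply_sub_add a (block n a)]
    ring
  rw [hperiod]
  exact Finset.single_le_sum (f := fun b => |g b - b|) (fun _ _ => abs_nonneg _) hmem

def diagShift (n : ℕ) (m : ℤ) (p : ℤ × ℤ) : ℤ × ℤ := (p.1 + n * m, p.2 + n * m)

def IsShiftInvariant (n : ℕ) (S : Set (ℤ × ℤ)) : Prop :=
  ∀ m p, diagShift n m p ∈ S ↔ p ∈ S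

lemma IsShiftInvariant.inter {S T : Set (ℤ × ℤ)} (hS : IsShiftInvariant n S)
    (hT : IsShiftInvariant n T) : IsShiftInvariant n (S ∩ T) := fun m p =>
  and_congr (hS m p) (hT m p)

lemma IsShiftInvariant.diff {S T : Set (ℤ × ℤ)} (hS : IsShiftInvariant n S)
    (hT : IsShiftInvariant n T) : IsShiftInvariant n (S \ T) := fun m p =>
  and_congr (hS m p) (not_congr (hT m p))

lemma IsAffinePerm.isShiftInvariant_inversions (hg : IsAffinePerm n g) :
    IsShiftInvariant n (inversions g) := fun m p => by
  simp [inversions, diagShift, hg.apply_add_mul_s15]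

/-- A fundamental domain for the diagonal shift by `(n, n)`. -/
def window (n : ℕ) : Set (ℤ × ℤ) := {p | p.1 ∈ Set.Icc 1 (n : ℤ)}

/-- For a shift-invariant `S`, the number of orbits of the diagonal shift on `S`. -/
noncomputable def windowCard (n : ℕ) (S : Set (ℤ × ℤ)) : ℕ := (S ∩ window n).ncard

def toWindow (n : ℕ) (p : ℤ × ℤ) : ℤ × ℤ := diagShift n (-block n p.1) p

lemma toWindow_mem (hn : 0 < n) (p : ℤ × ℤ) : toWindow n p ∈ window n := by
  simpa [toWindow, diagShift, window, ← sub_eq_add_neg] using sub_block_mem_Icc hn p.1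

lemma toWindow_diagShift (hn : 0 < n) (m : ℤ) (p : ℤ × ℤ) :
    toWindow n (diagShift n m p) = toWindow n p := by
  simp only [toWindow, diagShift, block_add_mul hn, Prod.mk.injEq]
  constructor <;> ring

lemma toWindow_eq_self (hn : 0 < n) {p : ℤ × ℤ} (hp : p ∈ window n) : toWindow n p = p := by
  simp [toWindow, diagShift, block_eq_zero hn hp]

lemma toWindow_symm_toWindow (hn : 0 < n) {e : ℤ × ℤ ≃ ℤ × ℤ}
    (he : ∀ m p, e (diagShift n m p) = diagShift n m (e p)) {p : ℤ × ℤ} (hp : p ∈ window n) :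
    toWindow n (e.symm (toWindow n (e p))) = p := by
  rw [show e.symm (toWindow n (e p)) = diagShift n _ p from e.symm_apply_eq.2 (he _ _).symm,
    toWindow_diagShift hn, toWindow_eq_self hn hp]

theorem windowCard_preimage (hn : 0 < n) {S : Set (ℤ × ℤ)} (hS : IsShiftInvariant n S)
    {e : ℤ × ℤ ≃ ℤ × ℤ} (he : ∀ m p, e (diagShift n m p) = diagShift n m (e p)) :
    windowCard n (e ⁻¹' S) = windowCard n S := by
  have he' : ∀ m p, e.symm (diagShift n m p) = diagShift n m (e.symm p) := fun m p =>
    e.symm_apply_eq.2 (by rw [he, e.apply_symm_apply])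
  refine Set.ncard_congr (fun p _ => toWindow n (e p))
    (fun p hp => ⟨(hS _ _).2 hp.1, toWindow_mem hn _⟩) (fun p q hp hq hpq => ?_)
    (fun q hq => ⟨toWindow n (e.symm q), ⟨?_, toWindow_mem hn _⟩, ?_⟩)
  · rw [← toWindow_symm_toWindow hn he hp.2, hpq, toWindow_symm_toWindow hn he hq.2]
  · show e (diagShift n _ (e.symm q)) ∈ S
    rw [he, hS, e.apply_symm_apply]
    exact hq.1
  · simpa using toWindow_symm_toWindow hn he' hq.2

lemma windowCard_inter_add_windowCard_diff (S T : Set (ℤ × ℤ)) (hS : (S ∩ window n).Finite) :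
    windowCard n (S ∩ T) + windowCard n (S \ T) = windowCard n S := by
  rw [windowCard, windowCard, windowCard, ← Set.ncard_inter_add_ncard_sdiff_eq_ncard _ T hS,
    Set.inter_right_comm, Set.inter_sdiff_right_comm]

lemma windowCard_eq_zero_iff (hn : 0 < n) {S : Set (ℤ × ℤ)} (hS : IsShiftInvariant n S)
    (hfin : (S ∩ window n).Finite) : windowCard n S = 0 ↔ S = ∅ := by
  rw [windowCard, Set.ncard_eq_zero hfin]
  refine ⟨fun h => Set.eq_empty_of_forall_notMem fun p hp => ?_, fun h => by simp [h]⟩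
  exact Set.eq_empty_iff_forall_notMem.1 h _ ⟨(hS _ _).2 hp, toWindow_mem hn p⟩

lemma aLen_eq_windowCard (g : Equiv.Perm ℤ) : aLen n g = windowCard n (inversions g) := by
  rw [aLen, windowCard]
  congr 1
  ext p
  simp only [inversions, window, Set.mem_inter_iff, Set.mem_ofPred_eq, Set.mem_Icc]
  tauto

lemma IsAffinePerm.finite_inversions_inter_window (hn : 0 < n) (hg : IsAffinePerm n g) :
    (inversions g ∩ window n).Finite := by
  obtain ⟨D, hD⟩ := hg.exists_abs_sub_le_s15 hn
  refine ((Set.finite_Icc 1 (n : ℤ)).prod (Set.finite_Icc 1 (n + 2 * D))).subset ?_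
  rintro ⟨x, y⟩ ⟨⟨hxy, hgxy⟩, hx1, hx2⟩
  have := abs_le.1 (hD x)
  have := abs_le.1 (hD y)
  exact ⟨⟨hx1, hx2⟩, by constructor <;> linarith⟩

end Affine

section Length

variable {n : ℕ} {u v : Equiv.Perm ℤ}

theorem aLen_mul_add_two_mul_windowCard (hn : 0 < n) (hu : IsAffinePerm n u)
    (hv : IsAffinePerm n v) :
    aLen n (u * v) + 2 * windowCard n (inversions u ∩ inversions v⁻¹) = aLen n u + aLen n v := by
  have hinvu := hu.isShiftInvariant_inversions
  have hinvv := hv.inv_s15.isShiftInvariant_inversions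
  have hA := windowCard_preimage hn (hinvu.diff hinvv) (e := Equiv.prodCongr v v)
    (fun m p => by simp [diagShift, hv.apply_add_mul_s15])
  have hC := windowCard_preimage hn (hinvu.inter hinvv)
    (e := (Equiv.prodCongr v v).trans (Equiv.prodComm ℤ ℤ))
    (fun m p => by simp [diagShift, hv.apply_add_mul_s15])
  rw [← inversions_mul_diff_inversions] at hA
  rw [← inversions_diff_inversions_mul] at hC
  have h₁ := windowCard_inter_add_windowCard_diff (inversions (u * v)) (inversions v)
    ((hu.mul_s15 hv).finite_inversions_inter_window hn)
  have h₂ := windowCard_inter_add_windowCard_diff (inversions v) (inversions (u * v))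
    (hv.finite_inversions_inter_window hn)
  have h₃ := windowCard_inter_add_windowCard_diff (inversions u) (inversions v⁻¹)
    (hu.finite_inversions_inter_window hn)
  rw [Set.inter_comm] at h₂
  simp only [aLen_eq_windowCard]
  omega

theorem aLen_mul_eq_add_iff (hn : 0 < n) (hu : IsAffinePerm n u) (hv : IsAffinePerm n v) :
    aLen n (u * v) = aLen n u + aLen n v ↔ inversions u ∩ inversions v⁻¹ = ∅ := by
  rw [← windowCard_eq_zero_iff hn
    (hu.isShiftInvariant_inversions.inter hv.inv_s15.isShiftInvariant_inversions)
    ((hu.finite_inversions_inter_window hn).subset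
      (Set.inter_subset_inter_left _ Set.inter_subset_left))]
  have := aLen_mul_add_two_mul_windowCard hn hu hv
  omega

end Length

section Blocks

variable {n : ℕ} {f : Equiv.Perm ℤ}

lemma block_lt_block_of_mem_inversions (hn : 0 < n) (hf : IsAffinePerm n f)
    (hmono : StrictMonoOn f (Set.Icc 1 n)) {x y : ℤ} (h : (x, y) ∈ inversions f) :
    block n x < block n y := by
  refine (block_mono hn h.1.le).lt_of_ne fun hxy => lt_asymm h.2 ?_
  have hy : y - n * block n x ∈ Set.Icc 1 (n : ℤ) := hxy ▸ sub_block_mem_Icc hn y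
  have := hmono (sub_block_mem_Icc hn x) hy (by linarith [h.1])
  rw [hf.apply_eq_apply_sub_add x (block n x), hf.apply_eq_apply_sub_add y (block n x)]
  linarith

lemma block_apply_eq_of_mem_inversions (hn : 0 < n) (hbd : ∀ a, a < f a ∧ f a ≤ a + n)
    {x y : ℤ} (hxy : block n x < block n y) (h : (x, y) ∈ inversions f) :
    block n (f x) = block n (f y) := by
  obtain ⟨-, hx⟩ := block_spec hn x
  obtain ⟨hy, -⟩ := block_spec hn y
  have : n * (block n x + 1) ≤ n * block n y := mul_le_mul_of_nonneg_left hxy (by positivity)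
  have hfx := hbd x
  have hfy := hbd y
  have key : ∀ z, f y ≤ z → z ≤ f x → block n z = block n x + 1 := fun z h₁ h₂ =>
    (block_eq_iff hn).2 ⟨by linarith, by linarith⟩
  rw [key _ h.2.le le_rfl, key _ le_rfl h.2.le]

theorem inversions_inter_inversions_inv_eq_empty_of_strictMonoOn (hn : 0 < n)
    (hf : IsAffinePerm n f) (hbd : ∀ a, a < f a ∧ f a ≤ a + n)
    (hmono : StrictMonoOn f (Set.Icc 1 n)) : inversions f ∩ inversions f⁻¹ = ∅ :=
  inversions_inter_inversions_inv_eq_empty (block n) False fun _ _ h =>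
    have hxy := block_lt_block_of_mem_inversions hn hf hmono h
    ⟨iff_false_intro hxy.ne, iff_of_true (block_apply_eq_of_mem_inversions hn hbd hxy h) not_false⟩

lemma block_eq_block_of_mem_inversions (hn : 0 < n) (hf : IsAffinePerm n f) {c : ℤ}
    (hspan : ∀ z ∈ Set.Icc 1 (n : ℤ), c < f z ∧ f z ≤ c + n) {x y : ℤ}
    (h : (x, y) ∈ inversions f) : block n x = block n y := by
  have hbounds : ∀ z, n * block n z + c < f z ∧ f z ≤ n * block n z + c + n := fun z => by
    rw [hf.apply_eq_apply_sub_add z (block n z)]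
    have := hspan _ (sub_block_mem_Icc hn z)
    constructor <;> linarith
  refine (block_mono hn h.1.le).eq_of_not_lt fun hxy => ?_
  have : n * (block n x + 1) ≤ n * block n y := mul_le_mul_of_nonneg_left hxy (by positivity)
  linarith [hbounds x, hbounds y, h.2]

lemma block_apply_lt_of_mem_inversions (hn : 0 < n) (hf : IsAffinePerm n f)
    (hstraddle : ∀ z ∈ Set.Icc 1 (n : ℤ), ∀ w ∈ Set.Icc 1 (n : ℤ), z < w → f w < f z →
      f w ≤ n ∧ (n : ℤ) < f z)
    {x y : ℤ} (hxy : block n x = block n y) (h : (x, y) ∈ inversions f) :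
    block n (f y) < block n (f x) := by
  set m := block n x
  have hy : y - n * m ∈ Set.Icc 1 (n : ℤ) := hxy ▸ sub_block_mem_Icc hn y
  obtain ⟨hlt, hinv⟩ := h
  rw [hf.apply_eq_apply_sub_add x m, hf.apply_eq_apply_sub_add y m] at hinv ⊢
  obtain ⟨hlow, hhigh⟩ := hstraddle _ (sub_block_mem_Icc hn x) _ hy (by linarith) (by linarith)
  have h₀ : block n (f (y - n * m)) ≤ 0 := by
    by_contra! hb
    nlinarith [(block_spec hn (f (y - n * m))).1]
  have h₁ : 1 ≤ block n (f (x - n * m)) := by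
    by_contra! hb
    nlinarith [(block_spec hn (f (x - n * m))).2]
  rw [block_add_mul hn, block_add_mul hn]
  linarith

theorem inversions_inter_inversions_inv_eq_empty_of_straddle (hn : 0 < n)
    (hf : IsAffinePerm n f) {c : ℤ} (hspan : ∀ z ∈ Set.Icc 1 (n : ℤ), c < f z ∧ f z ≤ c + n)
    (hstraddle : ∀ z ∈ Set.Icc 1 (n : ℤ), ∀ w ∈ Set.Icc 1 (n : ℤ), z < w → f w < f z →
      f w ≤ n ∧ (n : ℤ) < f z) :
    inversions f ∩ inversions f⁻¹ = ∅ :=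
  inversions_inter_inversions_inv_eq_empty (block n) True fun _ _ h =>
    have hxy := block_eq_block_of_mem_inversions hn hf hspan h
    ⟨iff_of_true hxy trivial,
      by simpa using (block_apply_lt_of_mem_inversions hn hf hstraddle hxy h).ne'⟩

end Blocks

section Lift

variable {n : ℕ} {π : Equiv.Perm (Fin n)} {f : Equiv.Perm ℤ}

lemma IsLift.apply_of_lt (hf : IsLift n π f) {b : Fin n} (h : b < π b) :
    f (b.val + 1) = (π b).val + 1 := by
  rw [hf.2, if_pos (by exact_mod_cast h)]

lemma IsLift.apply_of_le (hf : IsLift n π f) {b : Fin n} (h : π b ≤ b) :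
    f (b.val + 1) = (π b).val + 1 + n := by
  rw [hf.2, if_neg (by exact_mod_cast h.not_gt)]

lemma exists_fin_eq_of_mem_Icc {z : ℤ} (hz : z ∈ Set.Icc 1 (n : ℤ)) :
    ∃ b : Fin n, z = b.val + 1 := by
  obtain ⟨h₁, h₂⟩ := hz
  exact ⟨⟨(z - 1).toNat, by omega⟩, by simp; omega⟩

lemma strictMonoOn_of_forall_not_descentAt {s : Set (Fin n)} (hs : s.OrdConnected)
    (h : ∀ b : Fin n, ∀ hb : b.val + 1 < n, b ∈ s → ⟨b.val + 1, hb⟩ ∈ s → ¬ DescentAt n π b.val) :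
    StrictMonoOn π s := by
  refine strictMonoOn_of_lt_succ hs fun b hbmax hb hsucc => ?_
  have hlt : b.val < (Order.succ b).val := Order.lt_succ_of_not_isMax hbmax
  have hb₁ : b.val + 1 < n := by omega
  have hb_lt : b < ⟨b.val + 1, hb₁⟩ := Fin.lt_def.2 (Nat.lt_succ_self _)
  have hsucc_eq : Order.succ b = ⟨b.val + 1, hb₁⟩ :=
    le_antisymm (Order.succ_le_of_lt hb_lt) (Fin.le_def.2 hlt)
  rw [hsucc_eq] at hsucc ⊢
  exact lt_of_le_of_ne (not_lt.1 fun hd => h b hb₁ hb hsucc ⟨hb₁, hd⟩) (π.injective.ne hb_lt.ne)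

theorem IsLift.strictMonoOn_Icc (hf : IsLift n π f) {a : ℕ}
    (huniq : ∀ a', DescentAt n π a' → a' = a) (hfix : ∀ b : Fin n, b.val ≤ a → π b ≠ b) :
    StrictMonoOn f (Set.Icc 1 n) := by
  rintro z hz w hw hzw
  obtain ⟨b, rfl⟩ := exists_fin_eq_of_mem_Icc hz
  obtain ⟨c, rfl⟩ := exists_fin_eq_of_mem_Icc hw
  have : NeZero n := NeZero.of_pos b.pos
  have hmono₁ : StrictMonoOn π {b : Fin n | b.val ≤ a} :=
    strictMonoOn_of_forall_not_descentAt ⟨fun _ _ _ hy _ hz => (Fin.le_def.1 hz.2).trans hy⟩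
      fun b _ _ hs hd => by have := huniq _ hd; simp at hs; omega
  have hmono₂ : StrictMonoOn π {b : Fin n | a < b.val} :=
    strictMonoOn_of_forall_not_descentAt ⟨fun _ hx _ _ _ hz => hx.trans_le (Fin.le_def.1 hz.1)⟩
      fun b _ hs _ hd => by have := huniq _ hd; simp at hs; omega
  have hexc : ∀ b : Fin n, b.val ≤ a → b < π b := fun b hb =>
    ((hmono₁.mono fun c (hc : c ≤ b) => (Fin.le_def.1 hc).trans hb).Iic_id_le b le_rfl).lt_of_ne
      (hfix b hb).symm
  have hnexc : ∀ b : Fin n, a < b.val → π b ≤ b := fun b hb =>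
    (hmono₂.mono fun c (hc : b ≤ c) => hb.trans_le (Fin.le_def.1 hc)).Ici_le_id b le_rfl
  have hbc : b < c := Fin.lt_def.2 (by omega)
  have hπb := (π b).isLt
  rcases le_or_gt c.val a with hca | hac
  · have := Fin.lt_def.1 (hmono₁ (show b.val ≤ a by omega) hca hbc)
    rw [hf.apply_of_lt (hexc b (by omega)), hf.apply_of_lt (hexc c hca)]
    omega
  rcases le_or_gt b.val a with hba | hab
  · rw [hf.apply_of_lt (hexc b hba), hf.apply_of_le (hnexc c hac)]
    omega
  · have := Fin.lt_def.1 (hmono₂ hab hac hbc)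
    rw [hf.apply_of_le (hnexc b hab), hf.apply_of_le (hnexc c hac)]
    omega

def IsOppositeSchubert (k n : ℕ) (π : Equiv.Perm (Fin n)) : Prop :=
  (∀ c d : Fin n, c.val < k → d.val < k → c < d → π⁻¹ c < π⁻¹ d) ∧
    (∀ c d : Fin n, k ≤ c.val → k ≤ d.val → c < d → π⁻¹ c < π⁻¹ d) ∧
    (∀ b : Fin n, k ≤ (π b).val → π b ≠ b)

variable {k : ℕ}

lemma IsLift.apply_eq_of_isOppositeSchubert (hf : IsLift n π f) (hπ : IsOppositeSchubert k n π)
    (b : Fin n) :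
    ((π b).val < k ∧ f (b.val + 1) = (π b).val + 1 + n) ∨
      (k ≤ (π b).val ∧ f (b.val + 1) = (π b).val + 1) := by
  obtain ⟨hlow, hhigh, hfix⟩ := hπ
  have : NeZero n := NeZero.of_pos b.pos
  rcases lt_or_ge (π b).val k with h | h
  · have hmono : StrictMonoOn ⇑π⁻¹ {c : Fin n | c.val < k} := fun c hc d hd => hlow c d hc hd
    have := (hmono.mono fun c (hc : c ≤ π b) => (Fin.le_def.1 hc).trans_lt h).Iic_id_le (π b) le_rfl
    exact Or.inl ⟨h, hf.apply_of_le (by simpa using this)⟩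
  · have hmono : StrictMonoOn ⇑π⁻¹ {c : Fin n | k ≤ c.val} := fun c hc d hd => hhigh c d hc hd
    have := (hmono.mono fun c (hc : π b ≤ c) => h.trans (Fin.le_def.1 hc)).Ici_le_id (π b) le_rfl
    exact Or.inr ⟨h, hf.apply_of_lt ((by simpa using this : b ≤ π b).lt_of_ne (hfix b h).symm)⟩

theorem IsLift.window_span (hf : IsLift n π f) (hπ : IsOppositeSchubert k n π) (hk : k ≤ n) :
    ∀ z ∈ Set.Icc 1 (n : ℤ), (k : ℤ) < f z ∧ f z ≤ k + n := by
  intro z hz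
  obtain ⟨b, rfl⟩ := exists_fin_eq_of_mem_Icc hz
  have := (π b).isLt
  rcases hf.apply_eq_of_isOppositeSchubert hπ b with ⟨h, e⟩ | ⟨h, e⟩ <;> rw [e] <;> omega

theorem IsLift.window_straddle (hf : IsLift n π f) (hπ : IsOppositeSchubert k n π) :
    ∀ z ∈ Set.Icc 1 (n : ℤ), ∀ w ∈ Set.Icc 1 (n : ℤ), z < w → f w < f z →
      f w ≤ n ∧ (n : ℤ) < f z := by
  intro z hz w hw hzw hinv
  obtain ⟨b, rfl⟩ := exists_fin_eq_of_mem_Icc hz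
  obtain ⟨c, rfl⟩ := exists_fin_eq_of_mem_Icc hw
  have hcb : ¬ π⁻¹ (π c) < π⁻¹ (π b) := by
    simp only [Equiv.Perm.coe_inv, Equiv.symm_apply_apply, Fin.lt_def]
    omega
  have := (π b).isLt
  rcases hf.apply_eq_of_isOppositeSchubert hπ b with ⟨hb, eb⟩ | ⟨hb, eb⟩ <;>
    rcases hf.apply_eq_of_isOppositeSchubert hπ c with ⟨hc, ec⟩ | ⟨hc, ec⟩ <;>
    rw [eb, ec] at hinv ⊢
  · exact absurd (hπ.1 _ _ hc hb (Fin.lt_def.2 (by omega))) hcb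
  · omega
  · omega
  · exact absurd (hπ.2.1 _ _ hc hb (Fin.lt_def.2 (by omega))) hcb

end Lift

/-- If `π` indexes an open Schubert variety (unique descent, no fixed points
before it) or an open opposite Schubert variety, then `ℓ(i⁻¹·f·i) = ℓ(f)` for every
`ι ≤_∘ π` of type `(k,n)` with lift `i`. -/
theorem schubert_conjugate_length_eq
    (n k : ℕ) (π : Equiv.Perm (Fin n)) (f : Equiv.Perm ℤ)
    (hπ : IsType k n π) (hf : IsLift n π f) (hfB : f ∈ Bound k n)
    (hSchub :
      (∃ a : ℕ, DescentAt n π a ∧ (∀ a' : ℕ, DescentAt n π a' → a' = a) ∧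
        ∀ b : Fin n, b.val ≤ a → π b ≠ b) ∨
      ((∀ c d : Fin n, c.val < k → d.val < k → c < d → π⁻¹ c < π⁻¹ d) ∧
       (∀ c d : Fin n, k ≤ c.val → k ≤ d.val → c < d → π⁻¹ c < π⁻¹ d) ∧
       (∀ b : Fin n, k ≤ (π b).val → π b ≠ b))) :
    ∀ (ι : Equiv.Perm (Fin n)) (i : Equiv.Perm ℤ),
      IsType k n ι → IsLift n ι i → i ∈ Bound k n → LeR n i f →
      aLen n (i⁻¹ * f * i) = aLen n f := by
  intro ι i _ _ hiB hLeR
  obtain ⟨hfA, hfbd, -⟩ := hfB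
  have hn : 0 < n := by have := hfbd 0; omega
  have hiA : IsAffinePerm n i := hiB.1
  have hq : IsAffinePerm n (i⁻¹ * f) := hiA.inv_s15.mul_s15 hfA
  have hdisj : inversions f ∩ inversions f⁻¹ = ∅ := by
    rcases hSchub with ⟨a, -, huniq, hfix⟩ | hopp
    · exact inversions_inter_inversions_inv_eq_empty_of_strictMonoOn hn hfA hfbd
        (hf.strictMonoOn_Icc huniq hfix)
    · have hk : k ≤ n := (hπ ▸ Finset.card_filter_le _ _).trans_eq (Finset.card_fin n)
      exact inversions_inter_inversions_inv_eq_empty_of_straddle hn hfA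
        (hf.window_span hopp hk) (hf.window_straddle hopp)
  have hle : inversions i ∩ inversions (f⁻¹ * i) = ∅ := by
    have := (aLen_mul_eq_add_iff hn hiA hq).1 (by rwa [mul_inv_cancel_left])
    rwa [mul_inv_rev, inv_inv] at this
  rw [(aLen_mul_eq_add_iff hn hq hiA).2
    (inversions_inv_mul_inter_inversions_inv_eq_empty hle hdisj), hLeR, add_comm]
end
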